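/- Let t > 0 and let h and φ be centered Gaussian random variables with variances v_h² ≥ v_φ² > 0; set Δ² = v_h² − v_φ². Then |P(h ≥ t) − P(φ ≥ t)| ≤ 2·exp(−t²/(2Δ²)) + (Δ/(v_φ√(2π)))·exp(−t²/(2v_φ²))·(E[exp(2tΔ|N|/v_φ²)])^{1/2}, where N is a standard Gaussian random variable (the bound being trivially 0 when Δ = 0). -/

import Mathlib

noncomputable section

namespace PaperFormal

/-- A process together with its underlying probability space. -/
structure RVSetup (S : Type) where
  Ω : Type
  [m : MeasurableSpace Ω]
  P : MeasureTheory.Measure Ω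
  X : ℕ → Ω → S

attribute [instance] RVSetup.m

/-- A field (process indexed by a set of vertices `V`) together with its
underlying probability space. -/
structure FieldSetup (S V : Type) where
  Ω : Type
  [m : MeasurableSpace Ω]
  P : MeasureTheory.Measure Ω
  F : V → Ω → S

attribute [instance] FieldSetup.m

/-- A family of walks (one starting measure for each point of `S`) on a common
path space. -/
structure FamilySetup (S : Type) where
  Ω : Type
  [m : MeasurableSpace Ω]
  P : S → MeasureTheory.Measure Ω
  X : ℕ → Ω → S

attribute [instance] FamilySetup.m

open MeasureTheory ProbabilityTheory Filter Set
open scoped ENNReal NNReal Topology Classical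


/-! ### Basic measurable-space conventions -/

instance setMS {β : Type*} : MeasurableSpace (Set β) := ⊤
instance zmodMS {n : ℕ} : MeasurableSpace (ZMod n) := ⊤

/-- Total variation distance between two measures. -/
def tvDist {A : Type*} [MeasurableSpace A] (μ ν : Measure A) : ℝ :=
  ⨆ E : {E : Set A // MeasurableSet E}, |(μ E).toReal - (ν E).toReal|

/-- Coercion `ℕ∞ → ℝ≥0∞`. -/
def toE (k : ℕ∞) : ℝ≥0∞ := ENat.toENNReal k

/-! ### State spaces: the torus `ℤ_n^d` and the lattice `ℤ^d` -/

/-- The torus `ℤ_n^d`. -/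
abbrev Torus (n d : ℕ) := Fin d → ZMod n

/-- The lattice `ℤ^d`. -/
abbrev Zd (d : ℕ) := Fin d → ℤ

/-- Nearest-neighbour relation on `R^d` for a ring `R` (used for `ZMod n` and `ℤ`). -/
def nbr {d : ℕ} {R : Type*} [Add R] [Sub R] [One R] (x y : Fin d → R) : Prop :=
  ∃ i : Fin d, (y i = x i + 1 ∨ y i = x i - 1) ∧ ∀ j, j ≠ i → y j = x j

/-- One-step transition probability of the simple random walk in dimension `d`. -/
def stepProb {d : ℕ} {R : Type*} [Add R] [Sub R] [One R] (x y : Fin d → R) : ℝ≥0∞ :=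
  if nbr x y then (2 * (d : ℝ≥0∞))⁻¹ else 0

/-- The Markov property with simple-random-walk one-step transition probabilities. -/
def IsMarkovSRW {Ω : Type} [MeasurableSpace Ω] {d : ℕ} {R : Type} [Add R] [Sub R] [One R]
    (P : Measure Ω) (X : ℕ → Ω → (Fin d → R)) : Prop :=
  ∀ (t : ℕ) (w : ℕ → (Fin d → R)) (y : Fin d → R),
    P ({ω | ∀ i ≤ t, X i ω = w i} ∩ {ω | X (t + 1) ω = y})
      = P {ω | ∀ i ≤ t, X i ω = w i} * stepProb (w t) y

/-- `W` is a simple random walk on `ℤ_n^d` started from its stationary (uniform) distribution. -/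
def RVSetup.IsStationarySRW {n d : ℕ} (W : RVSetup (Torus n d)) : Prop :=
  IsProbabilityMeasure W.P ∧ (∀ t, Measurable (W.X t)) ∧
    (∀ x : Torus n d, W.P {ω | W.X 0 ω = x} = ((n : ℝ≥0∞) ^ d)⁻¹) ∧
    IsMarkovSRW W.P W.X

/-- `W` is a simple random walk on `ℤ^d` started from `x0`. -/
def RVSetup.IsSRWFrom {d : ℕ} (W : RVSetup (Zd d)) (x0 : Zd d) : Prop :=
  IsProbabilityMeasure W.P ∧ (∀ t, Measurable (W.X t)) ∧
    W.P {ω | W.X 0 ω = x0} = 1 ∧ IsMarkovSRW W.P W.X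

/-! ### Hitting times, uncovered set, cover time -/

/-- First time `≥ s` at which the process is in `A` (`⊤` if never). -/
def hitFrom {Ω S : Type*} (X : ℕ → Ω → S) (A : Set S) (s : ℕ∞) (ω : Ω) : ℕ∞ :=
  sInf {t : ℕ∞ | ∃ k : ℕ, t = (k : ℕ∞) ∧ s ≤ (k : ℕ∞) ∧ X k ω ∈ A}

/-- Hitting time `τ_x` of the point `x`. -/
def hitTime {Ω S : Type*} (X : ℕ → Ω → S) (x : S) : Ω → ℕ∞ :=
  hitFrom X {x} 0

/-- The uncovered set `𝒰(t) = {x : τ_x > t}`. -/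
def uncovered {Ω : Type} {n d : ℕ} (X : ℕ → Ω → Torus n d) (t : ℝ) (ω : Ω) :
    Set (Torus n d) :=
  {x | ENNReal.ofReal t < toE (hitTime X x ω)}

/-- The law of the walk conditioned to start at `x` (i.e. the walk started at `x`). -/
def RVSetup.from' {n d : ℕ} (W : RVSetup (Torus n d)) (x : Torus n d) : Measure W.Ω :=
  ProbabilityTheory.cond W.P {ω | W.X 0 ω = x}

/-- `max_y τ_y`. -/
def maxHit {Ω : Type} {n d : ℕ} (X : ℕ → Ω → Torus n d) (ω : Ω) : ℝ≥0∞ :=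
  ⨆ y : Torus n d, toE (hitTime X y ω)

/-- The expected cover time `t_cov = max_x E_x[max_y τ_y]`. -/
def covTime {n d : ℕ} (W : RVSetup (Torus n d)) : ℝ :=
  ⨆ x : Torus n d, (∫⁻ ω, maxHit W.X ω ∂(W.from' x)).toReal

/-- The law `ν_{α,n}` of `{x : Z_x = 1}` for i.i.d. Bernoulli(`p`) variables `(Z_x)`. -/
def nuLaw (n d : ℕ) (p : ℝ) : Measure (Set (Torus n d)) :=
  Measure.sum fun U : Finset (Torus n d) =>
    ((ENNReal.ofReal p) ^ U.card * (ENNReal.ofReal (1 - p)) ^ (n ^ d - U.card)) •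
      Measure.dirac (↑U : Set (Torus n d))

/-! ### Geometry on the torus -/

/-- `|a - b| ∧ (n - |a - b|)` for `a b : ZMod n`. -/
def cdist {n : ℕ} (a b : ZMod n) : ℕ := min (a - b).val (b - a).val

/-- Closed Euclidean ball in the torus. -/
def ballT {n d : ℕ} (x : Torus n d) (r : ℝ) : Set (Torus n d) :=
  {y | (∑ i, ((cdist (y i) (x i) : ℝ)) ^ 2) ≤ r ^ 2}

/-- Euclidean distance on the torus. -/
def tdist {n d : ℕ} (x y : Torus n d) : ℝ :=
  Real.sqrt (∑ i, ((cdist (x i) (y i) : ℝ)) ^ 2)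

/-- Outer boundary of a set. -/
def obdry {d : ℕ} {R : Type} [Add R] [Sub R] [One R] (A : Set (Fin d → R)) :
    Set (Fin d → R) :=
  {y | y ∉ A ∧ ∃ x ∈ A, nbr x y}

/-! ### Excursions -/

/-- The pair `(ρ_k, ρ̃_k)` of excursion stopping times across `B(x,R) \ B(x,r)`. -/
def excTimes {Ω : Type} {n d : ℕ} (X : ℕ → Ω → Torus n d) (x : Torus n d) (r R : ℝ) :
    ℕ → (Ω → ℕ∞) × (Ω → ℕ∞)
  | 0 =>
      let ρ : Ω → ℕ∞ := fun ω => hitFrom X (obdry (ballT x r)) 0 ω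
      (ρ, fun ω => hitFrom X (ballT x R)ᶜ (ρ ω) ω)
  | k + 1 =>
      let prev := excTimes X x r R k
      let ρ : Ω → ℕ∞ := fun ω => hitFrom X (obdry (ballT x r)) (prev.2 ω) ω
      (ρ, fun ω => hitFrom X (ballT x R)ᶜ (ρ ω) ω)

/-- `ρ̃_k^x`. -/
def rhot {Ω : Type} {n d : ℕ} (X : ℕ → Ω → Torus n d) (x : Torus n d) (r R : ℝ) (k : ℕ) :
    Ω → ℕ∞ :=
  (excTimes X x r R k).2

/-- `N_x(r,R,t)`: number of excursions across `B(x,R)\B(x,r)` completed before time `t`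
(after the walk first exits `B(x,R)`). -/
def Nexc {Ω : Type} {n d : ℕ} (X : ℕ → Ω → Torus n d) (x : Torus n d) (r R t : ℝ) (ω : Ω) :
    ℕ :=
  sInf {k : ℕ |
    ENNReal.ofReal t ≤ ∑ i ∈ Finset.Icc 1 k, (toE (rhot X x r R i ω) - toE (rhot X x r R (i - 1) ω))}

/-- `Y_j`: exit point of the `j`-th excursion across `B(0,R)\B(0,r)`. -/
def Yexit {Ω : Type} {n d : ℕ} (X : ℕ → Ω → Torus n d) (r R : ℝ) (j : ℕ) (ω : Ω) :
    Torus n d :=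
  X ((rhot X (0 : Torus n d) r R j ω).toNat) ω

/-- `(K, π)` is the transition matrix and stationary distribution of the exit-point chain
`(Y_j)` of the excursions across `B(0,R)\B(0,r)`. -/
def IsExitChain {n d : ℕ} (W : RVSetup (Torus n d)) (r R : ℝ)
    (K : Torus n d → Torus n d → ℝ≥0∞) (π : Torus n d → ℝ≥0∞) : Prop :=
  (∀ (j : ℕ) (w : ℕ → Torus n d) (y : Torus n d),
      W.P ({ω | ∀ i ≤ j, Yexit W.X r R i ω = w i} ∩ {ω | Yexit W.X r R (j + 1) ω = y})
        = W.P {ω | ∀ i ≤ j, Yexit W.X r R i ω = w i} * K (w j) y)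
    ∧ (∀ x, (∑' y, K x y) = 1)
    ∧ (∑' x, π x) = 1
    ∧ (∀ y, (∑' x, π x * K x y) = π y)
    ∧ (∀ x, x ∉ obdry (ballT (0 : Torus n d) R) → π x = 0)

/-- Powers of a transition kernel. -/
def kpow {S : Type} (K : S → S → ℝ≥0∞) : ℕ → S → S → ℝ≥0∞
  | 0 => fun x y => if x = y then 1 else 0
  | j + 1 => fun x y => ∑' z, kpow K j x z * K z y

/-- Total variation distance between two (sub)probability mass functions. -/
def massTV {S : Type} (μ ν : S → ℝ≥0∞) : ℝ :=
  ⨆ A : Set S, |(∑' a : A, μ a).toReal - (∑' a : A, ν a).toReal|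

/-- Mixing time of a chain with kernel `K` and stationary distribution `π`,
with the chain started from points of `supp`. -/
def mixTime {S : Type} (K : S → S → ℝ≥0∞) (π : S → ℝ≥0∞) (supp : Set S) : ℕ :=
  sInf {j : ℕ | ∀ x ∈ supp, massTV (kpow K j x) π ≤ 1 / 4}

/-- `T_{r,R} = E_{π̃}[ρ̃_1 - ρ̃_0]`, the expected excursion length started from `π̃`. -/
def Texc {n d : ℕ} (W : RVSetup (Torus n d)) (r R : ℝ) (π : Torus n d → ℝ≥0∞) : ℝ≥0∞ :=
  ∑' y : Torus n d, π y *
    ((∫⁻ ω in {ω | Yexit W.X r R 0 ω = y},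
        (toE (rhot W.X 0 r R 1 ω) - toE (rhot W.X 0 r R 0 ω)) ∂W.P)
      / W.P {ω | Yexit W.X r R 0 ω = y})

/-- `f(a,b) = P_a(τ_0 > ρ̃_0 | X(ρ̃_0) = b)`. -/
def fExc {n d : ℕ} (W : RVSetup (Torus n d)) (r R : ℝ) (a b : Torus n d) : ℝ :=
  ((W.from' a) ({ω | rhot W.X 0 r R 0 ω < hitTime W.X (0 : Torus n d) ω}
        ∩ {ω | Yexit W.X r R 0 ω = b})
    / (W.from' a) {ω | Yexit W.X r R 0 ω = b}).toReal

/-- `m = -E_ν[log f(Y_0, Y_1)]` where `ν(a,b) = π̃(a) K(a,b)`. -/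
def mExc {n d : ℕ} (W : RVSetup (Torus n d)) (r R : ℝ)
    (K : Torus n d → Torus n d → ℝ≥0∞) (π : Torus n d → ℝ≥0∞) : ℝ :=
  -∑' a : Torus n d, ∑' b : Torus n d, (π a * K a b).toReal * Real.log (fExc W r R a b)

/-- `t_* = (1/m) log(n^d) T_{r,R}`. -/
def tStar {n d : ℕ} (W : RVSetup (Torus n d)) (r R : ℝ)
    (K : Torus n d → Torus n d → ℝ≥0∞) (π : Torus n d → ℝ≥0∞) : ℝ :=
  (mExc W r R K π)⁻¹ * Real.log ((n : ℝ) ^ d) * (Texc W r R π).toReal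

/-- `A = α t_* / ((1+δ) T_{r,R})`. -/
def Aexc {n d : ℕ} (α δ : ℝ) (W : RVSetup (Torus n d)) (r R : ℝ)
    (K : Torus n d → Torus n d → ℝ≥0∞) (π : Torus n d → ℝ≥0∞) : ℝ :=
  α * tStar W r R K π / ((1 + δ) * (Texc W r R π).toReal)

/-- `σ_x`: first (real) time by which `A` excursions across `B(x,R)\B(x,r)` are completed. -/
def sigmaExc {Ω : Type} {n d : ℕ} (X : ℕ → Ω → Torus n d) (x : Torus n d) (r R A : ℝ)
    (ω : Ω) : ℝ :=
  sInf {t : ℝ | 0 ≤ t ∧ A ≤ (Nexc X x r R t ω : ℝ)}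

/-- `τ̃_x`: first visit to `x` after first hitting `∂B(x,R)`. -/
def tauTilde {Ω : Type} {n d : ℕ} (X : ℕ → Ω → Torus n d) (x : Torus n d) (R : ℝ)
    (ω : Ω) : ℕ∞ :=
  hitFrom X {x} (hitFrom X (obdry (ballT x R)) 0 ω) ω

/-- `Q_x = 1(τ̃_x > σ_x)`. -/
def Qx {Ω : Type} {n d : ℕ} (X : ℕ → Ω → Torus n d) (r R A : ℝ) (x : Torus n d)
    (ω : Ω) : ℝ :=
  if ENNReal.ofReal (sigmaExc X x r R A ω) < toE (tauTilde X x R ω) then 1 else 0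

/-- `Ū = {x : Q_x = 1}`. -/
def Uset {Ω : Type} {n d : ℕ} (X : ℕ → Ω → Torus n d) (r R A : ℝ) (ω : Ω) :
    Set (Torus n d) :=
  {x | Qx X r R A x ω = 1}

/-! ### The lattice `ℤ^d`: Green's function and return probability -/

/-- Green's function `G(0, x) = E[∑_t 1(X_t = x)]` for a walk `W`. -/
def greenZ {d : ℕ} (W : RVSetup (Zd d)) (x : Zd d) : ℝ :=
  (∫⁻ ω, (∑' t : ℕ, if W.X t ω = x then (1 : ℝ≥0∞) else 0) ∂W.P).toReal

/-- Return probability `p_d` of a walk `W` (started at 0). -/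
def returnProb {d : ℕ} (W : RVSetup (Zd d)) : ℝ :=
  (W.P {ω | ∃ t : ℕ, 1 ≤ t ∧ W.X t ω = 0}).toReal

/-- Euclidean norm on `ℤ^d`. -/
def znorm {d : ℕ} (x : Zd d) : ℝ := Real.sqrt (∑ i, ((x i : ℝ)) ^ 2)

/-- `c` is the constant in the asymptotic `G(0,x) ~ c ‖x‖^{2-d}`. -/
def IsGreenConst {d : ℕ} (W : RVSetup (Zd d)) (c : ℝ) : Prop :=
  ∀ z : ℕ → Zd d, Tendsto (fun k => znorm (z k)) atTop atTop →
    Tendsto (fun k => greenZ W (z k) * znorm (z k) ^ ((d : ℝ) - 2)) atTop (𝓝 c)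

/-! ### The Gaussian free field on a box -/

/-- `W` is a family of simple random walks on `ℤ^d`, `W.P x` being the law of the
walk started at `x`. -/
def FamilySetup.IsSRWFamily {d : ℕ} (W : FamilySetup (Zd d)) : Prop :=
  ∀ x : Zd d, IsProbabilityMeasure (W.P x) ∧ (∀ t, Measurable (W.X t)) ∧
    (W.P x) {ω | W.X 0 ω = x} = 1 ∧ IsMarkovSRW (W.P x) W.X

/-- The vertex set `[0,n]^d ∩ ℤ^d`. -/
def boxV (n d : ℕ) : Set (Zd d) := {x | ∀ i, 0 ≤ x i ∧ x i ≤ (n : ℤ)}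

/-- The boundary `∂[0,n]^d ∩ ℤ^d`. -/
def boxBdry (n d : ℕ) : Set (Zd d) := {x | x ∈ boxV n d ∧ ∃ i, x i = 0 ∨ x i = (n : ℤ)}

/-- The bulk `[δn, (1-δ)n]^d ∩ ℤ^d`. -/
def bulk (n d : ℕ) (δ : ℝ) : Set (Zd d) :=
  {x | ∀ i, δ * n ≤ (x i : ℝ) ∧ (x i : ℝ) ≤ (1 - δ) * n}

/-- `E_x[∑_{i=0}^{τ} 1(X_i = y)]`, where `τ` is the hitting time of
`∂[0,n]^d ∩ ℤ^d`: the covariance of the GFF on the box with zero boundary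
conditions. -/
def boxGreen {d : ℕ} (W : FamilySetup (Zd d)) (n : ℕ) (x y : Zd d) : ℝ :=
  (∫⁻ ω, (∑' i : ℕ,
      if (i : ℕ∞) ≤ hitFrom W.X (boxBdry n d) 0 ω ∧ W.X i ω = y then (1 : ℝ≥0∞) else 0)
    ∂(W.P x)).toReal

/-- Green's function of the whole-lattice walk family: `G(x,y) = E_x[∑_t 1(X_t = y)]`. -/
def latGreen {d : ℕ} (W : FamilySetup (Zd d)) (x y : Zd d) : ℝ :=
  (∫⁻ ω, (∑' t : ℕ, if W.X t ω = y then (1 : ℝ≥0∞) else 0) ∂(W.P x)).toReal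

/-- Return probability `p_d` for the family `W`. -/
def famReturnProb {d : ℕ} (W : FamilySetup (Zd d)) : ℝ :=
  ((W.P 0) {ω | ∃ t : ℕ, 1 ≤ t ∧ W.X t ω = 0}).toReal

/-- `φ = G.F` is a centered Gaussian field with covariance `cov` on the vertex set `V`:
every finite linear combination of the `φ_x`, `x ∈ V`, is a centered Gaussian
variable with the variance prescribed by `cov`. -/
def FieldSetup.IsGaussianField {I : Type} (G : FieldSetup ℝ I) (V : Set I)
    (cov : I → I → ℝ) : Prop :=
  IsProbabilityMeasure G.P ∧ (∀ x, Measurable (G.F x)) ∧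
    ∀ s : Finset I, ↑s ⊆ V → ∀ c : I → ℝ,
      MeasureTheory.Measure.map (fun ω => ∑ x ∈ s, c x * G.F x ω) G.P
        = gaussianReal 0 (Real.toNNReal (∑ x ∈ s, ∑ y ∈ s, c x * c y * cov x y))

/-- The threshold `√(2 α d G(0) log n)` for `α`-high points. -/
def highThr (d : ℕ) (α G0 : ℝ) (n : ℕ) : ℝ :=
  Real.sqrt (2 * α * d * G0 * Real.log n)

/-- The set `ℋ_α` of `α`-high points of the field `φ`. -/
def highPts {d : ℕ} (G : FieldSetup ℝ (Zd d)) (n : ℕ) (δ thr : ℝ) (ω : G.Ω) :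
    Set (Zd d) :=
  {x | x ∈ bulk n d δ ∧ thr ≤ G.F x ω}

/-- `Z = B.F` is an independent field of Bernoulli random variables with
success probabilities `p`. -/
def FieldSetup.IsBernoulliField {I : Type} (B : FieldSetup Bool I) (p : I → ℝ≥0∞) :
    Prop :=
  IsProbabilityMeasure B.P ∧ (∀ x, Measurable (B.F x)) ∧
    iIndepFun B.F B.P ∧
    ∀ x, B.P {ω | B.F x ω = true} = p x

/-- The random subset `{x ∈ bulk : Z_x = 1}` of the bulk attached to a Bernoulli field. -/
def bernSet {d : ℕ} (B : FieldSetup Bool (Zd d)) (n : ℕ) (δ : ℝ) (ω : B.Ω) :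
    Set (Zd d) :=
  {x | x ∈ bulk n d δ ∧ B.F x ω = true}


/-! ### Further helpers -/

/-- Conditional probability `μ(A | B)`. -/
def condProb {Ωs : Type} [MeasurableSpace Ωs] (μ : MeasureTheory.Measure Ωs)
    (A B : Set Ωs) : ℝ :=
  (μ (A ∩ B) / μ B).toReal

/-- Exit point `X(τ_R)` of the ball `B(0,R)`. -/
def exitPt {Ω : Type} {n d : ℕ} (X : ℕ → Ω → Torus n d) (R : ℝ) (ω : Ω) : Torus n d :=
  X ((hitFrom X (obdry (ballT (0 : Torus n d) R)) 0 ω).toNat) ω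

/-- The inner radius `r = n^{γ(1-ε)}`. -/
def rad (n : ℕ) (γ ε : ℝ) : ℝ := (n : ℝ) ^ (γ * (1 - ε))

/-- The outer radius `R = n^γ`. -/
def Rad (n : ℕ) (γ : ℝ) : ℝ := (n : ℝ) ^ γ

/-- The parameter `δ = r^{(2-d)/2} n^ψ`. -/
def deltaPar (n d : ℕ) (γ ε ψ : ℝ) : ℝ :=
  (rad n γ ε) ^ (((2 : ℝ) - d) / 2) * (n : ℝ) ^ ψ

/-- The transition kernel of the pair chain `(Y_{i-1}, Y_i)`. -/
def pairKernel {S : Type} (K : S → S → ℝ≥0∞) : S × S → S × S → ℝ≥0∞ :=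
  fun p q => if q.1 = p.2 then K q.1 q.2 else 0

/-- Total variation distance between two real-valued mass functions on a finite set. -/
def finTV {S : Type} (μ ν : S → ℝ) : ℝ :=
  ⨆ A : Finset S, |∑ a ∈ A, (μ a - ν a)|

/-- The σ-algebra `σ(Y_i : i ≥ 1)` generated by the exit points of the excursions. -/
def excSigma {n d : ℕ} (W : RVSetup (Torus n d)) (r R : ℝ) : MeasurableSpace W.Ω :=
  ⨆ i : ℕ, ⨆ _ : 1 ≤ i, MeasurableSpace.comap (Yexit W.X r R i) inferInstance

/-!
Rescaling turns `P(h ≥ t)` into `P(φ ≥ t')` with `t' = t v_φ / v_h`, so the difference of the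
tails is the `N(0, v_φ²)`-mass of `[t', t)`, at most `t - t'` times the density
`exp (-t² / (2 v_h²)) / (v_φ √(2π))` at `t'`. With `Δ² = v_h² - v_φ²` and `u = tΔ / v_φ²` one has
`t - t' ≤ uΔ`, `u ≤ exp (u² / 2)` and `u² / 2 - t² / (2 v_h²) ≤ u² - t² / (2 v_φ²)`, which leaves
`Δ / (v_φ √(2π)) · exp (-t² / (2 v_φ²)) · exp u²`. Finally `exp u² = exp ((2u)² / 2) ^ (1/2)` is
the square root of the moment generating function of `N` at `2u`, at most `E[exp (2u|N|)]`.
-/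

section GaussianTailComparison

open Real

lemma gaussianReal_Ici_eq_Ici_mul_div {σ τ : ℝ} (hσ : 0 < σ) (hτ : 0 < τ) (t : ℝ) :
    gaussianReal 0 (σ ^ 2).toNNReal (Ici t)
      = gaussianReal 0 (τ ^ 2).toNNReal (Ici (t * τ / σ)) := by
  have hmap : (gaussianReal 0 (τ ^ 2).toNNReal).map ((σ / τ) * ·)
      = gaussianReal 0 (σ ^ 2).toNNReal := by
    rw [gaussianReal_map_const_mul, mul_zero]
    congr 1
    ext
    simp only [NNReal.coe_mul, NNReal.coe_mk, Real.coe_toNNReal _ (sq_nonneg _)]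
    field_simp
  rw [← hmap, Measure.map_apply (measurable_const_mul _) measurableSet_Ici]
  congr 1
  ext x
  simp only [mem_preimage, mem_Ici]
  rw [div_le_iff₀ hσ, div_mul_eq_mul_div, le_div_iff₀ hτ, mul_comm x]

lemma abs_sub_gaussianReal_real_Ici {σ τ t : ℝ} (hτ : 0 < τ) (hτσ : τ ≤ σ) (ht : 0 ≤ t) :
    |(gaussianReal 0 (σ ^ 2).toNNReal).real (Ici t)
        - (gaussianReal 0 (τ ^ 2).toNNReal).real (Ici t)|
      = (gaussianReal 0 (τ ^ 2).toNNReal).real (Ico (t * τ / σ) t) := by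
  have hσ : 0 < σ := hτ.trans_le hτσ
  have hle : t * τ / σ ≤ t := div_le_of_le_mul₀ hσ.le ht (by nlinarith)
  rw [measureReal_def, gaussianReal_Ici_eq_Ici_mul_div hσ hτ, ← measureReal_def,
    ← measureReal_sdiff (Ici_subset_Ici.2 hle) measurableSet_Ici, Ici_sdiff_Ici,
    abs_of_nonneg measureReal_nonneg]

lemma gaussianPDFReal_antitoneOn (m : ℝ) (v : ℝ≥0) :
    AntitoneOn (gaussianPDFReal m v) (Ici m) := by
  intro x hx y _ hxy
  simp only [gaussianPDFReal]
  gcongr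
  exact sub_nonneg.2 hx

lemma gaussianReal_real_Ico_le {m a b : ℝ} {v : ℝ≥0} (hv : v ≠ 0) (hma : m ≤ a) (hab : a ≤ b) :
    (gaussianReal m v).real (Ico a b) ≤ (b - a) * gaussianPDFReal m v a := by
  rw [measureReal_def, gaussianReal_apply_eq_integral m hv,
    ENNReal.toReal_ofReal (setIntegral_nonneg measurableSet_Ico
      fun x _ => gaussianPDFReal_nonneg m v x)]
  calc ∫ x in Ico a b, gaussianPDFReal m v x
      ≤ ∫ _ in Ico a b, gaussianPDFReal m v a :=
        setIntegral_mono_on (integrable_gaussianPDFReal m v).integrableOn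
          (integrableOn_const measure_Ico_lt_top.ne) measurableSet_Ico
          fun x hx => gaussianPDFReal_antitoneOn m v hma (hma.trans hx.1) hx.1
    _ = (b - a) * gaussianPDFReal m v a := by
        rw [setIntegral_const, Real.volume_real_Ico_of_le hab, smul_eq_mul]

lemma le_exp_sq_div_two (u : ℝ) : u ≤ exp (u ^ 2 / 2) := by
  nlinarith [add_one_le_exp (u ^ 2 / 2), sq_nonneg (u - 1)]

lemma exp_sq_div_two_le_integral_exp_mul_abs {c : ℝ} (hc : 0 ≤ c) :
    exp (c ^ 2 / 2) ≤ ∫ s, exp (c * |s|) ∂(gaussianReal 0 1) := by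
  have hmgf : ∫ s, exp (c * s) ∂(gaussianReal 0 1) = exp (c ^ 2 / 2) := by
    simpa [mgf] using mgf_gaussianReal (μ := 0) (v := 1) (p := gaussianReal 0 1) (X := id)
      Measure.map_id c
  rw [← hmgf]
  exact integral_mono (integrable_exp_mul_gaussianReal c)
    (integrable_exp_mul_abs (integrable_exp_mul_gaussianReal c)
      (integrable_exp_mul_gaussianReal (-c)))
    fun s => exp_le_exp.2 (mul_le_mul_of_nonneg_left (le_abs_self s) hc)

lemma exp_sq_le_integral_exp_two_mul_abs_rpow_half {u : ℝ} (hu : 0 ≤ u) :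
    exp (u ^ 2) ≤ (∫ s, exp (2 * u * |s|) ∂(gaussianReal 0 1)) ^ ((1 : ℝ) / 2) := by
  calc exp (u ^ 2) = exp ((2 * u) ^ 2 / 2) ^ ((1 : ℝ) / 2) := by
        rw [← exp_mul]; ring_nf
    _ ≤ _ := by
        gcongr
        exact exp_sq_div_two_le_integral_exp_mul_abs (by positivity)

lemma sub_mul_gaussianPDFReal_le {t σ τ : ℝ} (ht : 0 ≤ t) (hτ : 0 < τ) (hτσ : τ ≤ σ) :
    (t - t * τ / σ) * gaussianPDFReal 0 (τ ^ 2).toNNReal (t * τ / σ)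
      ≤ √(σ ^ 2 - τ ^ 2) / (τ * √(2 * π)) * exp (-t ^ 2 / (2 * τ ^ 2))
          * exp ((t * √(σ ^ 2 - τ ^ 2) / τ ^ 2) ^ 2) := by
  have hσ : 0 < σ := hτ.trans_le hτσ
  set D := √(σ ^ 2 - τ ^ 2)
  have hD2 : D ^ 2 = σ ^ 2 - τ ^ 2 := sq_sqrt (by nlinarith)
  set u := t * D / τ ^ 2
  have hpdf : gaussianPDFReal 0 (τ ^ 2).toNNReal (t * τ / σ)
      = (τ * √(2 * π))⁻¹ * exp (-t ^ 2 / (2 * σ ^ 2)) := by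
    rw [gaussianPDFReal, Real.coe_toNNReal _ (sq_nonneg _), sqrt_mul' _ (sq_nonneg _),
      sqrt_sq hτ.le, sub_zero, mul_comm τ]
    congr 2
    field_simp
  have hgap : t - t * τ / σ ≤ u * D := by
    rw [show u * D = t * D ^ 2 / τ ^ 2 by ring, hD2, sub_le_iff_le_add,
      div_add_div _ _ (by positivity) hσ.ne', le_div_iff₀ (by positivity)]
    have : 0 ≤ σ ^ 2 + σ * τ - τ ^ 2 := by nlinarith
    nlinarith [mul_nonneg (mul_nonneg ht (sub_nonneg.2 hτσ)) this]
  have hexponent : t ^ 2 / (2 * τ ^ 2) - t ^ 2 / (2 * σ ^ 2) ≤ u ^ 2 / 2 :=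
    calc t ^ 2 / (2 * τ ^ 2) - t ^ 2 / (2 * σ ^ 2) = (t * D) ^ 2 / (2 * (τ ^ 2 * σ ^ 2)) := by
          rw [mul_pow, hD2]; field_simp
      _ ≤ (t * D) ^ 2 / (2 * (τ ^ 2 * τ ^ 2)) := by gcongr
      _ = u ^ 2 / 2 := by ring
  calc (t - t * τ / σ) * gaussianPDFReal 0 (τ ^ 2).toNNReal (t * τ / σ)
      ≤ u * D * ((τ * √(2 * π))⁻¹ * exp (-t ^ 2 / (2 * σ ^ 2))) := by
        rw [hpdf]; gcongr
    _ ≤ exp (u ^ 2 / 2) * D * ((τ * √(2 * π))⁻¹ * exp (-t ^ 2 / (2 * σ ^ 2))) := by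
        gcongr; exact le_exp_sq_div_two u
    _ = D / (τ * √(2 * π)) * exp (u ^ 2 / 2 + -t ^ 2 / (2 * σ ^ 2)) := by
        rw [exp_add]; ring
    _ ≤ _ := by
        rw [mul_assoc, ← exp_add]
        gcongr _ * exp ?_
        rw [neg_div, neg_div]
        linarith

end GaussianTailComparison

/-- **Theorem (Statement 17).** If `h ~ N(0, v_h²)`, `φ ~ N(0, v_φ²)` with
`v_h² ≥ v_φ² > 0`, `Δ² = v_h² - v_φ²` and `t > 0`, then
`|P(h ≥ t) - P(φ ≥ t)| ≤ 2 exp(-t²/(2Δ²))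
  + (Δ/(v_φ √(2π))) exp(-t²/(2v_φ²)) (E[exp(2tΔ|N|/v_φ²)])^{1/2}`,
with `N` a standard Gaussian (the bound being trivially satisfied when `Δ = 0`). -/
theorem gaussian_variance_comparison
    (t vh vp : ℝ) (ht : 0 < t) (hvp : 0 < vp) (hle : vp ≤ vh) :
    |((gaussianReal 0 (Real.toNNReal (vh ^ 2))) {s | t ≤ s}).toReal
        - ((gaussianReal 0 (Real.toNNReal (vp ^ 2))) {s | t ≤ s}).toReal|
      ≤ 2 * Real.exp (-t ^ 2 / (2 * (vh ^ 2 - vp ^ 2)))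
        + Real.sqrt (vh ^ 2 - vp ^ 2) / (vp * Real.sqrt (2 * Real.pi))
            * Real.exp (-t ^ 2 / (2 * vp ^ 2))
            * (∫ s, Real.exp (2 * t * Real.sqrt (vh ^ 2 - vp ^ 2) * |s| / vp ^ 2)
                ∂(gaussianReal 0 1)) ^ ((1 : ℝ) / 2) := by
  have hvh : 0 < vh := hvp.trans_le hle
  set D := Real.sqrt (vh ^ 2 - vp ^ 2)
  calc _ = (gaussianReal 0 (vp ^ 2).toNNReal).real (Ico (t * vp / vh) t) :=
        abs_sub_gaussianReal_real_Ici hvp hle ht.le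
    _ ≤ (t - t * vp / vh) * gaussianPDFReal 0 (vp ^ 2).toNNReal (t * vp / vh) :=
        gaussianReal_real_Ico_le (Real.toNNReal_pos.2 (by positivity)).ne' (by positivity)
          (div_le_of_le_mul₀ hvh.le ht.le (by nlinarith))
    _ ≤ D / (vp * Real.sqrt (2 * Real.pi)) * Real.exp (-t ^ 2 / (2 * vp ^ 2))
          * Real.exp ((t * D / vp ^ 2) ^ 2) :=
        sub_mul_gaussianPDFReal_le ht.le hvp hle
    _ ≤ D / (vp * Real.sqrt (2 * Real.pi)) * Real.exp (-t ^ 2 / (2 * vp ^ 2))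
          * (∫ s, Real.exp (2 * t * D * |s| / vp ^ 2) ∂(gaussianReal 0 1)) ^ ((1 : ℝ) / 2) := by
        refine mul_le_mul_of_nonneg_left
          ((exp_sq_le_integral_exp_two_mul_abs_rpow_half (by positivity)).trans_eq ?_)
          (by positivity)
        congr 2; ext s; congr 1; ring
    _ ≤ _ := le_add_of_nonneg_left (by positivity)

end PaperFormal
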